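/- For any generator enriched lattices (L,G) and (K,H), the minor poset of the Cartesian product (L,G)×(K,H) is isomorphic to the diamond product M(L,G) ◊ M(K,H). -/

import Mathlib

open Finset

/-- A generator-enriched lattice datum inside an ambient lattice `L`:
a minimal element `z` together with a finite generating set of elements
strictly above `z`. The underlying set of elements consists of all joins
of `z` with subsets of the generating set. -/
structure GEL (L : Type*) [Lattice L] [DecidableEq L] where
  z : L
  gens : Finset L
  lt_gens : ∀ g ∈ gens, z < g

namespace GEL

variable {L K : Type*} [Lattice L] [OrderBot L] [DecidableEq L]

/-- The underlying set of elements of a generator enriched lattice. -/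
def carrier (M : GEL L) : Finset L :=
  M.gens.powerset.image fun X => X.sup id ⊔ M.z

/-- Deletion of a set of generators. -/
def delete (M : GEL L) (I : Finset L) : GEL L :=
  ⟨M.z, M.gens \ I, fun g hg => M.lt_gens g (Finset.mem_sdiff.mp hg).1⟩

/-- Restriction to a set of generators. -/
def restrict (M : GEL L) (I : Finset L) : GEL L :=
  M.delete (M.gens \ I)

/-- Contraction by a set of generators. -/
def contract (M : GEL L) (I : Finset L) : GEL L :=
  ⟨I.sup id ⊔ M.z,
   (M.gens.image fun g => g ⊔ (I.sup id ⊔ M.z)).erase (I.sup id ⊔ M.z),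
   fun g hg => by
     obtain ⟨hne, hg'⟩ := Finset.mem_erase.mp hg
     obtain ⟨h, -, rfl⟩ := Finset.mem_image.mp hg'
     exact lt_of_le_of_ne le_sup_right (Ne.symm hne)⟩

open Classical in
/-- Contraction by an element: contract by all generators below it. -/
noncomputable def contractEl (M : GEL L) (ℓ : L) : GEL L :=
  M.contract (M.gens.filter fun g => g ≤ ℓ)

/-- A single deletion or contraction step. -/
def Step (M N : GEL L) : Prop :=
  ∃ I ⊆ M.gens, N = M.delete I ∨ N = M.contract I

/-- `Minor M N` : `N` is a minor of `M`, i.e. obtained from `M` by a finite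
sequence of deletions and contractions. -/
def Minor (M N : GEL L) : Prop :=
  Relation.ReflTransGen Step M N

/-- The generator enriched lattice on a lattice with `⊥`, with the given generating set. -/
def ofGens (G : Finset L) (hG : ∀ g ∈ G, (⊥ : L) < g) : GEL L :=
  ⟨⊥, G, hG⟩

/-- The underlying type of the minor poset of `T`: all minors of `T`
together with an adjoined minimum `none`. -/
abbrev MP (T : GEL L) := Option {M : GEL L // T.Minor M}

/-- The order relation of the minor poset. -/
def mple (T : GEL L) : MP T → MP T → Prop
  | none, _ => True
  | some _, none => False
  | some A, some B => B.1.Minor A.1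

/-- The rank function of the minor poset. -/
def mrank (T : GEL L) : MP T → ℕ
  | none => 0
  | some A => A.1.gens.card + 1

/-- A parallel: an element `ℓ` and distinct generators `g, h` with
`g ⊔ ℓ = h ⊔ ℓ ≠ ℓ`. -/
def HasParallel (M : GEL L) : Prop :=
  ∃ ℓ ∈ M.carrier, ∃ g ∈ M.gens, ∃ h ∈ M.gens,
    g ≠ h ∧ g ⊔ ℓ = h ⊔ ℓ ∧ g ⊔ ℓ ≠ ℓ

/-- Isomorphism of generator enriched lattices: a join-preserving bijection of the
underlying sets carrying the generating set onto the generating set. -/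
def GIso [Lattice K] [OrderBot K] [DecidableEq K] (M : GEL L) (N : GEL K) : Prop :=
  ∃ f : L → K, Set.BijOn f ↑M.carrier ↑N.carrier ∧
    (∀ a ∈ M.carrier, ∀ b ∈ M.carrier, f (a ⊔ b) = f a ⊔ f b) ∧
    f '' ↑M.gens = ↑N.gens

open Classical in
/-- The image generator enriched lattice `⟨f(I) | f(z)⟩` of a strong map. -/
noncomputable def map [Lattice K] [DecidableEq K] (f : L → K) (M : GEL L) : GEL K :=
  ⟨f M.z, (M.gens.image f).filter fun y => f M.z < y,
   fun g hg => (Finset.mem_filter.mp hg).2⟩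

/-- `T` lifts join irreducibles: for every `ℓ` and generator `g` with `g ≰ ℓ`,
the element `g ⊔ ℓ` is join irreducible in the interval `[ℓ, ⊤]`. -/
def LiftsJI (T : GEL L) : Prop :=
  ∀ ℓ : L, ∀ g ∈ T.gens, ¬ g ≤ ℓ →
    ∀ a b : L, ℓ ≤ a → ℓ ≤ b → g ⊔ ℓ = a ⊔ b → g ⊔ ℓ = a ∨ g ⊔ ℓ = b

end GEL

/-- The Cartesian product of two generator enriched lattices. -/
def GEL.prod {L K : Type*} [Lattice L] [DecidableEq L] [Lattice K] [DecidableEq K]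
    (A : GEL L) (B : GEL K) : GEL (L × K) :=
  ⟨(A.z, B.z),
   A.gens.image (fun g => (g, B.z)) ∪ B.gens.image (fun h => (A.z, h)),
   by
     intro g hg
     simp only [Finset.mem_union, Finset.mem_image] at hg
     rcases hg with ⟨a, ha, rfl⟩ | ⟨b, hb, rfl⟩
     · exact Prod.mk_lt_mk.mpr (Or.inl ⟨A.lt_gens a ha, le_rfl⟩)
     · exact Prod.mk_lt_mk.mpr (Or.inr ⟨le_rfl, B.lt_gens b hb⟩)⟩

/-- The order relation of the diamond product `M(L,G) ◊ M(K,H)`: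
pairs of nonbottom elements ordered componentwise, with a minimum adjoined. -/
def diamondLE {L K : Type*} [Lattice L] [OrderBot L] [DecidableEq L]
    [Lattice K] [OrderBot K] [DecidableEq K] (A : GEL L) (B : GEL K) :
    Option ({M : GEL L // A.Minor M} × {N : GEL K // B.Minor N}) →
    Option ({M : GEL L // A.Minor M} × {N : GEL K // B.Minor N}) → Prop
  | none, _ => True
  | some _, none => False
  | some p, some q => q.1.1.Minor p.1.1 ∧ q.2.1.Minor p.2.1

namespace GEL

variable {L K : Type*} [Lattice L] [OrderBot L] [DecidableEq L]
  [Lattice K] [OrderBot K] [DecidableEq K]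

lemma ext' {M N : GEL L} (hz : M.z = N.z) (hg : M.gens = N.gens) : M = N := by
  cases M; cases N; simp_all

lemma delete_empty (M : GEL L) : M.delete ∅ = M := ext' rfl (by simp [delete])

lemma contract_empty (M : GEL L) : M.contract ∅ = M := by
  have hz : (∅ : Finset L).sup id ⊔ M.z = M.z := by simp
  refine ext' hz ?_
  show ((M.gens.image fun g => g ⊔ ((∅ : Finset L).sup id ⊔ M.z)).erase
      ((∅ : Finset L).sup id ⊔ M.z)) = M.gens
  rw [hz]
  have himg : (M.gens.image fun g => g ⊔ M.z) = M.gens.image id := by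
    apply Finset.image_congr
    intro g hg
    exact sup_eq_left.mpr (M.lt_gens g hg).le
  rw [himg, Finset.image_id]
  exact Finset.erase_eq_of_notMem (fun h => lt_irrefl _ (M.lt_gens _ h))

lemma prod_inj {M₁ N₁ : GEL L} {M₂ N₂ : GEL K} (h : M₁.prod M₂ = N₁.prod N₂) :
    M₁ = N₁ ∧ M₂ = N₂ := by
  have hz : (M₁.z, M₂.z) = (N₁.z, N₂.z) := congrArg GEL.z h
  have hz1 : M₁.z = N₁.z := congrArg Prod.fst hz
  have hz2 : M₂.z = N₂.z := congrArg Prod.snd hz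
  have hg := congrArg GEL.gens h
  simp only [GEL.prod] at hg
  have key1 : M₁.gens = N₁.gens := by
    ext g
    constructor <;> intro hgm
    · have : (g, M₂.z) ∈ N₁.gens.image (fun g => (g, N₂.z)) ∪
          N₂.gens.image (fun h => (N₁.z, h)) := by
        rw [← hg]
        exact Finset.mem_union_left _ (Finset.mem_image_of_mem _ hgm)
      simp only [Finset.mem_union, Finset.mem_image] at this
      rcases this with ⟨a, ha, he⟩ | ⟨b, hb, he⟩
      · injection he with h1 h2; subst h1; exact ha
      · exfalso
        injection he with h1 h2
        rw [← h1, ← hz1] at hgm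
        exact lt_irrefl _ (M₁.lt_gens _ hgm)
    · have : (g, N₂.z) ∈ M₁.gens.image (fun g => (g, M₂.z)) ∪
          M₂.gens.image (fun h => (M₁.z, h)) := by
        rw [hg]
        exact Finset.mem_union_left _ (Finset.mem_image_of_mem _ hgm)
      simp only [Finset.mem_union, Finset.mem_image] at this
      rcases this with ⟨a, ha, he⟩ | ⟨b, hb, he⟩
      · injection he with h1 h2; subst h1; exact ha
      · exfalso
        injection he with h1 h2
        rw [← h1, hz1] at hgm
        exact lt_irrefl _ (N₁.lt_gens _ hgm)
  have key2 : M₂.gens = N₂.gens := by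
    ext g
    constructor <;> intro hgm
    · have : (M₁.z, g) ∈ N₁.gens.image (fun g => (g, N₂.z)) ∪
          N₂.gens.image (fun h => (N₁.z, h)) := by
        rw [← hg]
        exact Finset.mem_union_right _ (Finset.mem_image_of_mem _ hgm)
      simp only [Finset.mem_union, Finset.mem_image] at this
      rcases this with ⟨a, ha, he⟩ | ⟨b, hb, he⟩
      · exfalso
        injection he with h1 h2
        rw [← h2, ← hz2] at hgm
        exact lt_irrefl _ (M₂.lt_gens _ hgm)
      · injection he with h1 h2; subst h2; exact hb
    · have : (N₁.z, g) ∈ M₁.gens.image (fun g => (g, M₂.z)) ∪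
          M₂.gens.image (fun h => (M₁.z, h)) := by
        rw [hg]
        exact Finset.mem_union_right _ (Finset.mem_image_of_mem _ hgm)
      simp only [Finset.mem_union, Finset.mem_image] at this
      rcases this with ⟨a, ha, he⟩ | ⟨b, hb, he⟩
      · exfalso
        injection he with h1 h2
        rw [← h2, hz2] at hgm
        exact lt_irrefl _ (N₂.lt_gens _ hgm)
      · injection he with h1 h2; subst h2; exact hb
  exact ⟨ext' hz1 key1, ext' hz2 key2⟩

lemma prod_delete (M₁ : GEL L) (M₂ : GEL K) (I₁ : Finset L) (I₂ : Finset K) :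
    (M₁.prod M₂).delete
      (I₁.image (fun g => (g, M₂.z)) ∪ I₂.image (fun h => (M₁.z, h))) =
    (M₁.delete I₁).prod (M₂.delete I₂) := by
  refine ext' rfl ?_
  ext ⟨a, b⟩
  simp only [GEL.prod, GEL.delete, Finset.mem_sdiff, Finset.mem_union, Finset.mem_image,
    Prod.mk.injEq]
  constructor
  · rintro ⟨h1 | h1, h2⟩
    · obtain ⟨g, hg, rfl, rfl⟩ := h1
      left
      refine ⟨g, ⟨hg, ?_⟩, rfl, rfl⟩
      intro hgI
      exact h2 (Or.inl ⟨g, hgI, rfl, rfl⟩)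
    · obtain ⟨h, hh, rfl, rfl⟩ := h1
      right
      refine ⟨h, ⟨hh, ?_⟩, rfl, rfl⟩
      intro hhI
      exact h2 (Or.inr ⟨h, hhI, rfl, rfl⟩)
  · rintro (⟨g, hg, rfl, rfl⟩ | ⟨h, hh, rfl, rfl⟩)
    · obtain ⟨hg1, hg2⟩ := hg
      refine ⟨Or.inl ⟨g, hg1, rfl, rfl⟩, ?_⟩
      rintro (⟨g', hg', rfl, -⟩ | ⟨h', hh', he, -⟩)
      · exact hg2 hg'
      · exact absurd he.symm (ne_of_gt (M₁.lt_gens g hg1))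
    · obtain ⟨hh1, hh2⟩ := hh
      refine ⟨Or.inr ⟨h, hh1, rfl, rfl⟩, ?_⟩
      rintro (⟨g', hg', -, he⟩ | ⟨h', hh', -, rfl⟩)
      · exact absurd he.symm (ne_of_gt (M₂.lt_gens h hh1))
      · exact hh2 hh'

lemma sup_image_union (M₁ : GEL L) (M₂ : GEL K) (I₁ : Finset L) (I₂ : Finset K) :
    (I₁.image (fun g => (g, M₂.z)) ∪ I₂.image (fun h => (M₁.z, h))).sup id
      ⊔ (M₁.z, M₂.z) = (I₁.sup id ⊔ M₁.z, I₂.sup id ⊔ M₂.z) := by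
  set S := I₁.image (fun g => (g, M₂.z)) ∪ I₂.image (fun h => (M₁.z, h)) with hS
  have h1 : (S.sup id).1 = I₁.sup id ⊔ I₂.sup (fun _ => M₁.z) := by
    rw [Finset.comp_sup_eq_sup_comp (Prod.fst : L × K → L) (fun x y => rfl) rfl,
      hS, Finset.sup_union, Finset.sup_image, Finset.sup_image]
    rfl
  have h2 : (S.sup id).2 = I₁.sup (fun _ => M₂.z) ⊔ I₂.sup id := by
    rw [Finset.comp_sup_eq_sup_comp (Prod.snd : L × K → K) (fun x y => rfl) rfl,
      hS, Finset.sup_union, Finset.sup_image, Finset.sup_image]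
    rfl
  have e1 : (S.sup id ⊔ (M₁.z, M₂.z)).1 = I₁.sup id ⊔ M₁.z := by
    show (S.sup id).1 ⊔ M₁.z = _
    rw [h1, sup_assoc]
    congr 1
    exact sup_eq_right.mpr (Finset.sup_le fun _ _ => le_refl M₁.z)
  have e2 : (S.sup id ⊔ (M₁.z, M₂.z)).2 = I₂.sup id ⊔ M₂.z := by
    show (S.sup id).2 ⊔ M₂.z = _
    rw [h2, sup_comm (I₁.sup fun _ => M₂.z), sup_assoc]
    congr 1
    exact sup_eq_right.mpr (Finset.sup_le fun _ _ => le_refl M₂.z)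
  exact Prod.ext e1 e2

lemma prod_contract (M₁ : GEL L) (M₂ : GEL K) (I₁ : Finset L) (I₂ : Finset K) :
    (M₁.prod M₂).contract
      (I₁.image (fun g => (g, M₂.z)) ∪ I₂.image (fun h => (M₁.z, h))) =
    (M₁.contract I₁).prod (M₂.contract I₂) := by
  have hsup : (I₁.image (fun g => (g, M₂.z)) ∪ I₂.image (fun h => (M₁.z, h))).sup id
      ⊔ (M₁.prod M₂).z = (I₁.sup id ⊔ M₁.z, I₂.sup id ⊔ M₂.z) :=
    sup_image_union M₁ M₂ I₁ I₂
  have ha : M₁.z ⊔ (I₁.sup id ⊔ M₁.z) = I₁.sup id ⊔ M₁.z := sup_eq_right.mpr le_sup_right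
  have hb : M₂.z ⊔ (I₂.sup id ⊔ M₂.z) = I₂.sup id ⊔ M₂.z := sup_eq_right.mpr le_sup_right
  refine ext' hsup ?_
  show ((M₁.prod M₂).gens.image fun g =>
      g ⊔ ((I₁.image (fun g => (g, M₂.z)) ∪ I₂.image (fun h => (M₁.z, h))).sup id
        ⊔ (M₁.prod M₂).z)).erase
      ((I₁.image (fun g => (g, M₂.z)) ∪ I₂.image (fun h => (M₁.z, h))).sup id
        ⊔ (M₁.prod M₂).z)
      = ((M₁.contract I₁).prod (M₂.contract I₂)).gens
  rw [hsup]
  ext ⟨x, y⟩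
  simp only [GEL.prod, GEL.contract, Finset.mem_erase, Finset.mem_image, Finset.mem_union,
    Prod.mk.injEq, ne_eq]
  constructor
  · rintro ⟨hne, p, hp, hpe⟩
    rcases hp with ⟨g, hg, rfl⟩ | ⟨h, hh, rfl⟩
    · have hx : g ⊔ (I₁.sup id ⊔ M₁.z) = x := congrArg Prod.fst hpe
      have hy : y = I₂.sup id ⊔ M₂.z := by
        have h2 : M₂.z ⊔ (I₂.sup id ⊔ M₂.z) = y := congrArg Prod.snd hpe
        rw [← h2, hb]
      exact Or.inl ⟨x, ⟨fun hxz => hne ⟨hxz, hy⟩, g, hg, hx⟩, rfl, hy.symm⟩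
    · have hy : h ⊔ (I₂.sup id ⊔ M₂.z) = y := congrArg Prod.snd hpe
      have hx : x = I₁.sup id ⊔ M₁.z := by
        have h1 : M₁.z ⊔ (I₁.sup id ⊔ M₁.z) = x := congrArg Prod.fst hpe
        rw [← h1, ha]
      exact Or.inr ⟨y, ⟨fun hyz => hne ⟨hx, hyz⟩, h, hh, hy⟩, hx.symm, rfl⟩
  · rintro (⟨a, ⟨hane, g, hg, hga⟩, rfl, hy⟩ | ⟨a, ⟨hane, h, hh, hha⟩, hx, rfl⟩)
    · refine ⟨fun hc => hane hc.1, (g, M₂.z), Or.inl ⟨g, hg, rfl⟩, ?_⟩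
      show (g ⊔ (I₁.sup id ⊔ M₁.z), M₂.z ⊔ (I₂.sup id ⊔ M₂.z)) = _
      rw [hga, hb, hy]
    · refine ⟨fun hc => hane hc.2, (M₁.z, h), Or.inr ⟨h, hh, rfl⟩, ?_⟩
      show (M₁.z ⊔ (I₁.sup id ⊔ M₁.z), h ⊔ (I₂.sup id ⊔ M₂.z)) = _
      rw [hha, ha, hx]

lemma step_prod_left {M₁ N₁ : GEL L} (M₂ : GEL K) (h : Step M₁ N₁) :
    Step (M₁.prod M₂) (N₁.prod M₂) := by
  obtain ⟨I, hI, hcase⟩ := h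
  refine ⟨I.image (fun g => (g, M₂.z)), ?_, ?_⟩
  · intro x hx
    obtain ⟨g, hg, rfl⟩ := Finset.mem_image.mp hx
    exact Finset.mem_union_left _ (Finset.mem_image_of_mem _ (hI hg))
  · have hu : I.image (fun g => (g, M₂.z)) =
        I.image (fun g => (g, M₂.z)) ∪ (∅ : Finset K).image (fun h => (M₁.z, h)) := by
      simp
    rcases hcase with rfl | rfl
    · left; rw [hu, prod_delete, delete_empty]
    · right; rw [hu, prod_contract, contract_empty]

lemma step_prod_right (M₁ : GEL L) {M₂ N₂ : GEL K} (h : Step M₂ N₂) :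
    Step (M₁.prod M₂) (M₁.prod N₂) := by
  obtain ⟨I, hI, hcase⟩ := h
  refine ⟨I.image (fun h => (M₁.z, h)), ?_, ?_⟩
  · intro x hx
    obtain ⟨g, hg, rfl⟩ := Finset.mem_image.mp hx
    exact Finset.mem_union_right _ (Finset.mem_image_of_mem _ (hI hg))
  · have hu : I.image (fun h => (M₁.z, h)) =
        (∅ : Finset L).image (fun g => (g, M₂.z)) ∪ I.image (fun h => (M₁.z, h)) := by
      simp
    rcases hcase with rfl | rfl
    · left; rw [hu, prod_delete, delete_empty]
    · right; rw [hu, prod_contract, contract_empty]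

lemma minor_prod {M₁ N₁ : GEL L} {M₂ N₂ : GEL K} (h1 : M₁.Minor N₁) (h2 : M₂.Minor N₂) :
    (M₁.prod M₂).Minor (N₁.prod N₂) := by
  have l1 : (M₁.prod M₂).Minor (N₁.prod M₂) := by
    unfold Minor at h1 ⊢
    exact Relation.ReflTransGen.lift (fun X : GEL L => X.prod M₂)
      (fun a b hab => step_prod_left M₂ hab) _ _ h1
  have l2 : (N₁.prod M₂).Minor (N₁.prod N₂) := by
    unfold Minor at h2 ⊢
    exact Relation.ReflTransGen.lift (fun X : GEL K => N₁.prod X)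
      (fun a b hab => step_prod_right N₁ hab) _ _ h2
  exact l1.trans l2

lemma step_prod_decomp {M₁ : GEL L} {M₂ : GEL K} {N : GEL (L × K)}
    (h : Step (M₁.prod M₂) N) :
    ∃ N₁ N₂, Step M₁ N₁ ∧ Step M₂ N₂ ∧ N = N₁.prod N₂ := by
  classical
  obtain ⟨I, hI, hcase⟩ := h
  set I₁ := M₁.gens.filter (fun g => (g, M₂.z) ∈ I) with hI1
  set I₂ := M₂.gens.filter (fun h' => (M₁.z, h') ∈ I) with hI2
  have hIeq : I = I₁.image (fun g => (g, M₂.z)) ∪ I₂.image (fun h => (M₁.z, h)) := by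
    ext x
    simp only [Finset.mem_union, Finset.mem_image, hI1, hI2, Finset.mem_filter]
    constructor
    · intro hx
      have hxg := hI hx
      simp only [GEL.prod, Finset.mem_union, Finset.mem_image] at hxg
      rcases hxg with ⟨g, hg, rfl⟩ | ⟨h', hh, rfl⟩
      · exact Or.inl ⟨g, ⟨hg, hx⟩, rfl⟩
      · exact Or.inr ⟨h', ⟨hh, hx⟩, rfl⟩
    · rintro (⟨g, ⟨hg, hgI⟩, rfl⟩ | ⟨h', ⟨hh, hhI⟩, rfl⟩)
      · exact hgI
      · exact hhI
  rcases hcase with rfl | rfl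
  · exact ⟨M₁.delete I₁, M₂.delete I₂,
      ⟨I₁, Finset.filter_subset _ _, Or.inl rfl⟩,
      ⟨I₂, Finset.filter_subset _ _, Or.inl rfl⟩,
      by rw [hIeq, prod_delete]⟩
  · exact ⟨M₁.contract I₁, M₂.contract I₂,
      ⟨I₁, Finset.filter_subset _ _, Or.inr rfl⟩,
      ⟨I₂, Finset.filter_subset _ _, Or.inr rfl⟩,
      by rw [hIeq, prod_contract]⟩

lemma minor_prod_decomp {M₁ : GEL L} {M₂ : GEL K} {P : GEL (L × K)}
    (h : (M₁.prod M₂).Minor P) :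
    ∃ N₁ N₂, M₁.Minor N₁ ∧ M₂.Minor N₂ ∧ P = N₁.prod N₂ := by
  induction h with
  | refl => exact ⟨M₁, M₂, .refl, .refl, rfl⟩
  | tail hsteps hstep ih =>
    obtain ⟨Q₁, Q₂, h1, h2, rfl⟩ := ih
    obtain ⟨R₁, R₂, s1, s2, rfl⟩ := step_prod_decomp hstep
    exact ⟨R₁, R₂, h1.tail s1, h2.tail s2, rfl⟩

lemma minor_prod_iff {M₁ N₁ : GEL L} {M₂ N₂ : GEL K} :
    (M₁.prod M₂).Minor (N₁.prod N₂) ↔ M₁.Minor N₁ ∧ M₂.Minor N₂ := by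
  constructor
  · intro h
    obtain ⟨Q₁, Q₂, h1, h2, he⟩ := minor_prod_decomp h
    obtain ⟨rfl, rfl⟩ := prod_inj he.symm
    exact ⟨h1, h2⟩
  · rintro ⟨h1, h2⟩; exact minor_prod h1 h2

end GEL

/-- The minor poset of a Cartesian product of generator enriched lattices is
isomorphic to the diamond product of the two minor posets. -/
theorem minorPoset_prod_iso_diamond {L K : Type*}
    [Lattice L] [OrderBot L] [DecidableEq L]
    [Lattice K] [OrderBot K] [DecidableEq K]
    (A : GEL L) (B : GEL K)
    (hA : ∀ ℓ : L, ℓ ∈ A.carrier) (hB : ∀ k : K, k ∈ B.carrier) :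
    ∃ e : GEL.MP (A.prod B) ≃
        Option ({M : GEL L // A.Minor M} × {N : GEL K // B.Minor N}),
      ∀ x y : GEL.MP (A.prod B),
        GEL.mple (A.prod B) x y ↔ diamondLE A B (e x) (e y) := by
  classical
  set f : ({M : GEL L // A.Minor M} × {N : GEL K // B.Minor N}) →
      {M : GEL (L × K) // (A.prod B).Minor M} :=
    fun p => ⟨p.1.1.prod p.2.1, GEL.minor_prod p.1.2 p.2.2⟩ with hf
  have hinj : Function.Injective f := by
    rintro ⟨⟨P₁, hP1⟩, ⟨P₂, hP2⟩⟩ ⟨⟨Q₁, hQ1⟩, ⟨Q₂, hQ2⟩⟩ h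
    obtain ⟨e1, e2⟩ := GEL.prod_inj (congrArg Subtype.val h)
    simp only [Prod.mk.injEq, Subtype.mk.injEq]
    exact ⟨e1, e2⟩
  have hsurj : Function.Surjective f := by
    rintro ⟨P, hP⟩
    obtain ⟨N₁, N₂, h1, h2, rfl⟩ := GEL.minor_prod_decomp hP
    exact ⟨(⟨N₁, h1⟩, ⟨N₂, h2⟩), rfl⟩
  set e0 := Equiv.ofBijective f ⟨hinj, hsurj⟩ with he0
  refine ⟨Equiv.optionCongr e0.symm, ?_⟩
  rintro (_ | a) (_ | b)
  · exact Iff.rfl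
  · exact Iff.rfl
  · exact Iff.rfl
  · have ha : a.1 = ((e0.symm a).1.1).prod ((e0.symm a).2.1) :=
      congrArg Subtype.val (e0.apply_symm_apply a).symm
    have hb : b.1 = ((e0.symm b).1.1).prod ((e0.symm b).2.1) :=
      congrArg Subtype.val (e0.apply_symm_apply b).symm
    show b.1.Minor a.1 ↔ _
    rw [ha, hb]
    exact GEL.minor_prod_iff
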